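/- arXiv:1606.03773 — 6 statements merged into one kernel-verified Lean document; each statement's English description precedes it below -/
import Mathlib

section
/- Let (Ω, μ) be a probability measure space, f ∈ L_p(μ) for 0 < p < ∞, and suppose f satisfies the L_∞ Remez inequality with parameters b and R: for every measurable set B ⊆ Ω with μ(B) ≤ b, the essential supremum of |f| on Ω is at most R times the essential supremum of |f| on Ω \ B. Then for every measurable set B ⊆ Ω with μ(B) ≤ b/2, one has ‖f‖_{L_p(Ω)} ≤ 2^{1/p} R ‖f‖_{L_p(Ω∖B)}. -/
/-!
Put `I = ∫_{Bᶜ} |f|^p` and fix `t` with `b t^p > 2 I`. By Markov's inequality the set `D ⊆ Bᶜ`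
where `|f| ≥ t` has measure at most `b/2`, so `B ∪ D` has measure at most `b` and `|f| < t` off it;
the `L_∞` Remez inequality then gives `ess sup |f| ≤ R t`. Letting `t^p ↓ 2I/b`, we get
`∫_B |f|^p ≤ μ(B) (ess sup |f|)^p ≤ (b/2) R^p (2I/b) = R^p I`, and adding `∫_{Bᶜ} |f|^p = I ≤ R^p I`
gives `∫ |f|^p ≤ 2 R^p I`.
-/

open MeasureTheory Real

section General

variable {α : Type*} [MeasurableSpace α] {ν : Measure α}

lemma essSup_le_of_ae_le_of_nonneg {g : α → ℝ} {t : ℝ} (ht : 0 ≤ t) (hg : ∀ᵐ x ∂ν, g x ≤ t) :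
    essSup g ν ≤ t := by
  rw [essSup_eq_sInf]
  have ht_mem : t ∈ {a : ℝ | ν {x | a < g x} = 0} := by
    simpa [not_le] using ae_iff.mp hg
  by_cases hbdd : BddBelow {a : ℝ | ν {x | a < g x} = 0}
  · exact csInf_le hbdd ht_mem
  · rw [Real.sInf_of_not_bddBelow hbdd]
    exact ht

lemma integral_abs_rpow_nonneg (f : α → ℝ) (p : ℝ) : 0 ≤ ∫ x, |f x| ^ p ∂ν :=
  integral_nonneg fun x => rpow_nonneg (abs_nonneg (f x)) p

/-- Markov's inequality, for a measurable hull of `{x | ε ≤ h x}`. -/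
lemma exists_measurableSet_mul_measureReal_le_integral {h : α → ℝ} (h_nonneg : 0 ≤ᵐ[ν] h)
    (h_int : Integrable h ν) (ε : ℝ) :
    ∃ D, MeasurableSet D ∧ ε * ν.real D ≤ ∫ x, h x ∂ν ∧ ∀ x ∉ D, h x < ε := by
  refine ⟨toMeasurable ν {x | ε ≤ h x}, measurableSet_toMeasurable _ _, ?_, fun x hx => ?_⟩
  · rw [measureReal_def, measure_toMeasurable]
    exact mul_meas_ge_le_integral_of_nonneg h_nonneg h_int ε
  · exact not_le.mp fun hle => hx (subset_toMeasurable ν _ hle)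

end General

section Remez

variable {Ω : Type*} [MeasurableSpace Ω] {μ : Measure Ω} {f : Ω → ℝ} {b R p : ℝ}

def LInftyRemez (μ : Measure Ω) (f : Ω → ℝ) (b R : ℝ) : Prop :=
  ∀ B : Set Ω, MeasurableSet B → μ B ≤ ENNReal.ofReal b →
    essSup (fun x => |f x|) μ ≤ R * essSup (fun x => |f x|) (μ.restrict Bᶜ)

namespace LInftyRemez

variable [IsFiniteMeasure μ] {B : Set Ω}

lemma essSup_le_of_setIntegral_le (hRem : LInftyRemez μ f b R) (hR : 0 ≤ R) (hp : 0 < p)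
    (hB : MeasurableSet B) (hμB : μ B ≤ ENNReal.ofReal (b / 2))
    (hint : IntegrableOn (fun x => |f x| ^ p) Bᶜ μ) {t : ℝ} (ht : 0 < t)
    (hI : 2 * ∫ x in Bᶜ, |f x| ^ p ∂μ ≤ b * t ^ p) :
    essSup (fun x => |f x|) μ ≤ R * t := by
  obtain ⟨D, hD, hμD, hlt⟩ := exists_measurableSet_mul_measureReal_le_integral
    (ae_of_all _ fun x => rpow_nonneg (abs_nonneg (f x)) p) hint (t ^ p)
  have htp : 0 < t ^ p := rpow_pos_of_pos ht p
  have hb : 0 ≤ b := by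
    nlinarith [integral_abs_rpow_nonneg (ν := μ.restrict Bᶜ) f p]
  have hμD' : μ (D \ B) ≤ ENNReal.ofReal (b / 2) := by
    rw [measureReal_restrict_apply hD, ← Set.sdiff_eq, measureReal_def] at hμD
    rw [ENNReal.le_ofReal_iff_toReal_le (measure_ne_top μ _) (by positivity)]
    exact le_of_mul_le_mul_left (by linarith) htp
  have hμBD : μ (B ∪ D) ≤ ENNReal.ofReal b := by
    calc μ (B ∪ D) = μ (B ∪ D \ B) := by rw [Set.union_sdiff_self]
      _ ≤ μ B + μ (D \ B) := measure_union_le _ _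
      _ ≤ ENNReal.ofReal (b / 2) + ENNReal.ofReal (b / 2) := add_le_add hμB hμD'
      _ = ENNReal.ofReal b := by
        rw [← ENNReal.ofReal_add (by positivity) (by positivity), add_halves]
  have h_off : ∀ᵐ x ∂μ.restrict (B ∪ D)ᶜ, |f x| ≤ t := by
    filter_upwards [ae_restrict_mem (hB.union hD).compl] with x hx
    have hxD : x ∉ D := fun h => hx (Or.inr h)
    exact ((rpow_lt_rpow_iff (abs_nonneg _) ht.le hp).mp (hlt x hxD)).le
  calc essSup (fun x => |f x|) μ
      ≤ R * essSup (fun x => |f x|) (μ.restrict (B ∪ D)ᶜ) := hRem _ (hB.union hD) hμBD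
    _ ≤ R * t := mul_le_mul_of_nonneg_left (essSup_le_of_ae_le_of_nonneg ht.le h_off) hR

lemma essSup_le (hRem : LInftyRemez μ f b R) (hR : 0 < R) (hb : 0 < b) (hp : 0 < p)
    (hB : MeasurableSet B) (hμB : μ B ≤ ENNReal.ofReal (b / 2))
    (hint : IntegrableOn (fun x => |f x| ^ p) Bᶜ μ) :
    essSup (fun x => |f x|) μ ≤ R * (2 / b * ∫ x in Bᶜ, |f x| ^ p ∂μ) ^ (1 / p) := by
  set I := ∫ x in Bᶜ, |f x| ^ p ∂μ
  have hI0 : 0 ≤ 2 / b * I := mul_nonneg (by positivity) (integral_abs_rpow_nonneg f p)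
  rw [mul_comm, ← div_le_iff₀ hR]
  refine le_of_forall_gt_imp_ge_of_dense fun t ht => ?_
  have ht0 : 0 < t := (rpow_nonneg hI0 _).trans_lt ht
  have htp : 2 / b * I < t ^ p := by
    calc 2 / b * I = ((2 / b * I) ^ (1 / p)) ^ p := by
          rw [← rpow_mul hI0, one_div_mul_cancel hp.ne', rpow_one]
      _ < t ^ p := rpow_lt_rpow (rpow_nonneg hI0 _) ht hp
  rw [div_le_iff₀ hR, mul_comm]
  refine hRem.essSup_le_of_setIntegral_le hR.le hp hB hμB hint ht0 ?_
  rw [div_mul_eq_mul_div, div_lt_iff₀ hb] at htp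
  linarith

lemma setIntegral_rpow_le (hRem : LInftyRemez μ f b R) (hR : 0 < R) (hb : 0 < b) (hp : 0 < p)
    (hfb : MemLp f ⊤ μ) (hint : Integrable (fun x => |f x| ^ p) μ)
    (hB : MeasurableSet B) (hμB : μ B ≤ ENNReal.ofReal (b / 2)) :
    ∫ x in B, |f x| ^ p ∂μ ≤ R ^ p * ∫ x in Bᶜ, |f x| ^ p ∂μ := by
  set I := ∫ x in Bᶜ, |f x| ^ p ∂μ
  have hI0 : 0 ≤ 2 / b * I := mul_nonneg (by positivity) (integral_abs_rpow_nonneg f p)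
  have h_ae : ∀ᵐ x ∂μ, |f x| ^ p ≤ R ^ p * (2 / b * I) := by
    have hM := hRem.essSup_le hR hb hp hB hμB hint.integrableOn
    have h_le : ∀ᵐ x ∂μ, |f x| ≤ essSup (fun x => |f x|) μ := by
      simpa [lpNorm_exponent_top_eq_essSup hfb] using ae_le_lpNorm_exponent_top hfb
    filter_upwards [h_le] with x hx
    calc |f x| ^ p ≤ (R * (2 / b * I) ^ (1 / p)) ^ p :=
          rpow_le_rpow (abs_nonneg _) (hx.trans hM) hp.le
      _ = R ^ p * (2 / b * I) := by
          rw [mul_rpow hR.le (rpow_nonneg hI0 _), ← rpow_mul hI0, one_div_mul_cancel hp.ne',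
            rpow_one]
  have hμB' : μ.real B ≤ b / 2 := ENNReal.toReal_le_of_le_ofReal (by positivity) hμB
  calc ∫ x in B, |f x| ^ p ∂μ ≤ ∫ _ in B, R ^ p * (2 / b * I) ∂μ :=
        integral_mono_ae hint.integrableOn (integrable_const _) (ae_restrict_of_ae h_ae)
    _ = μ.real B * (R ^ p * (2 / b * I)) := by rw [setIntegral_const, smul_eq_mul]
    _ ≤ b / 2 * (R ^ p * (2 / b * I)) := by gcongr
    _ = R ^ p * I := by field_simp

end LInftyRemez

end Remez

theorem remez_infty_implies_remez_p_general
    {Ω : Type*} [MeasurableSpace Ω] (μ : Measure Ω) [IsProbabilityMeasure μ]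
    (f : Ω → ℝ) (p : ℝ) (hp : 0 < p) (b R : ℝ)
    (hb : 0 < b) (hR : 1 ≤ R)
    (hf : MemLp f (ENNReal.ofReal p) μ) (hfb : MemLp f ⊤ μ)
    (hRem : ∀ B : Set Ω, MeasurableSet B → μ B ≤ ENNReal.ofReal b →
      essSup (fun x => |f x|) μ ≤ R * essSup (fun x => |f x|) (μ.restrict Bᶜ)) :
    ∀ B : Set Ω, MeasurableSet B → μ B ≤ ENNReal.ofReal (b / 2) →
      (∫ x, |f x| ^ p ∂μ) ^ (1 / p) ≤
        2 ^ (1 / p) * R * (∫ x in Bᶜ, |f x| ^ p ∂μ) ^ (1 / p) := by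
  intro B hB hμB
  have hint : Integrable (fun x => |f x| ^ p) μ := by
    simpa [ENNReal.toReal_ofReal hp.le] using
      hf.integrable_norm_rpow (by simpa using hp) ENNReal.ofReal_ne_top
  set I := ∫ x in Bᶜ, |f x| ^ p ∂μ
  have hI0 : 0 ≤ I := integral_abs_rpow_nonneg f p
  have hRp : 1 ≤ R ^ p := one_le_rpow hR hp.le
  have hIB := LInftyRemez.setIntegral_rpow_le hRem (by linarith) hb hp hfb hint hB hμB
  have htotal : ∫ x, |f x| ^ p ∂μ ≤ 2 * R ^ p * I := by
    rw [← integral_add_compl hB hint]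
    nlinarith
  calc (∫ x, |f x| ^ p ∂μ) ^ (1 / p) ≤ (2 * R ^ p * I) ^ (1 / p) :=
        rpow_le_rpow (integral_abs_rpow_nonneg f p) htotal (by positivity)
    _ = 2 ^ (1 / p) * R * I ^ (1 / p) := by
        rw [mul_rpow (by positivity) hI0, mul_rpow zero_le_two (by positivity),
          ← rpow_mul (by linarith), mul_one_div_cancel hp.ne', rpow_one]

/-- an L_∞ Remez inequality with parameters b, R implies the
L_p Remez inequality with parameters b/2, 2^{1/p} R. -/
theorem remez_infty_implies_remez_p
    {Ω : Type*} [MeasurableSpace Ω] (μ : Measure Ω) [IsProbabilityMeasure μ]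
    (f : Ω → ℝ) (p : ℝ) (hp : 0 < p) (b R : ℝ)
    (hb : 0 < b) (hb1 : b ≤ 1) (hR : 1 ≤ R)
    (hf : MemLp f (ENNReal.ofReal p) μ) (hfb : MemLp f ⊤ μ)
    (hRem : ∀ B : Set Ω, MeasurableSet B → μ B ≤ ENNReal.ofReal b →
      essSup (fun x => |f x|) μ ≤ R * essSup (fun x => |f x|) (μ.restrict Bᶜ)) :
    ∀ B : Set Ω, MeasurableSet B → μ B ≤ ENNReal.ofReal (b / 2) →
      (∫ x, |f x| ^ p ∂μ) ^ (1 / p) ≤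
        2 ^ (1 / p) * R * (∫ x in Bᶜ, |f x| ^ p ∂μ) ^ (1 / p) :=
  remez_infty_implies_remez_p_general μ f p hp b R hb hR hf hfb hRem
end

section
/- Let (Ω, μ) be a probability measure space and suppose f satisfies the L_∞ Remez inequality with parameters b and R: for every measurable B ⊆ Ω with μ(B) ≤ b, ess sup_Ω |f| ≤ R · ess sup_{Ω∖B} |f|. Then for every 0 < q < ∞, the Nikolskii inequality ‖f‖_{L_∞(Ω)} ≤ R b^{-1/q} ‖f‖_{L_q(Ω)} holds. -/
/-!
The Remez hypothesis lets us discard any set of measure at most `b` when computing the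
essential supremum of `|f|`, at the price of the factor `R`. By Markov's inequality the set where
`|f|^q` exceeds `b⁻¹ ∫ |f|^q` has measure at most `b`, and off that set
`|f| ≤ (b⁻¹ ∫ |f|^q)^{1/q}`.
-/

open MeasureTheory Real Filter

section

variable {α : Type*} [MeasurableSpace α]

lemma essSup_zero_measure_real (f : α → ℝ) : essSup f (0 : Measure α) = 0 := by
  simp only [essSup, ae_zero, limsup, limsSup, map_bot, eventually_bot, Set.ofPred_true,
    Real.sInf_univ]

lemma essSup_le_of_ae_le_of_nonneg_s2 {ν : Measure α} {f : α → ℝ} {c : ℝ} (hc : 0 ≤ c)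
    (hf : 0 ≤ f) (hle : ∀ᵐ x ∂ν, f x ≤ c) : essSup f ν ≤ c := by
  rcases eq_or_ne ν 0 with rfl | hν
  · rwa [essSup_zero_measure_real]
  · have : NeZero ν := ⟨hν⟩
    exact essSup_le_of_ae_le c hle (isCoboundedUnder_le_of_le _ (x := 0) hf)

/-- The strict inequality makes this hold also when `∫ h = 0`. -/
lemma measure_integral_div_lt_le {μ : Measure α} [IsFiniteMeasure μ] {h : α → ℝ}
    (h_nonneg : 0 ≤ᵐ[μ] h) (h_int : Integrable h μ) {b : ℝ} (hb : 0 < b) :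
    μ {x | (∫ x, h x ∂μ) / b < h x} ≤ ENNReal.ofReal b := by
  set I := ∫ x, h x ∂μ
  have hI_nonneg : 0 ≤ I := integral_nonneg_of_ae h_nonneg
  rcases hI_nonneg.eq_or_lt with hI | hI
  · have h_zero : h =ᵐ[μ] 0 := (integral_eq_zero_iff_of_nonneg_ae h_nonneg h_int).mp hI.symm
    have h_null : μ {x | I / b < h x} = 0 := by
      refine measure_eq_zero_iff_ae_notMem.mpr ?_
      filter_upwards [h_zero] with x hx
      simpa [hx] using div_nonneg hI_nonneg hb.le
    simp [h_null]
  · have h_markov := mul_meas_ge_le_integral_of_nonneg h_nonneg h_int (I / b)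
    have h_ge : μ.real {x | I / b ≤ h x} ≤ b := by
      refine le_of_mul_le_mul_left ?_ (div_pos hI hb)
      rwa [div_mul_cancel₀ _ hb.ne']
    calc μ {x | I / b < h x} ≤ μ {x | I / b ≤ h x} :=
          measure_mono fun _ hx => le_of_lt (Set.mem_ofPred.mp hx)
      _ ≤ ENNReal.ofReal b := by rwa [← ENNReal.ofReal_toReal (measure_ne_top _ _),
          ENNReal.ofReal_le_ofReal_iff hb.le]

/-- The exceptional set `{t < |f|}` need not be measurable; its measurable hull serves as `B`. -/
lemma essSup_abs_le_of_remez {μ : Measure α} {f : α → ℝ} {b R t : ℝ} (hR : 0 ≤ R) (ht : 0 ≤ t)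
    (hRem : ∀ B : Set α, MeasurableSet B → μ B ≤ ENNReal.ofReal b →
      essSup (fun x => |f x|) μ ≤ R * essSup (fun x => |f x|) (μ.restrict Bᶜ))
    (h_large : μ {x | t < |f x|} ≤ ENNReal.ofReal b) :
    essSup (fun x => |f x|) μ ≤ R * t := by
  set B := toMeasurable μ {x | t < |f x|}
  have h_off : essSup (fun x => |f x|) (μ.restrict Bᶜ) ≤ t := by
    refine essSup_le_of_ae_le_of_nonneg_s2 ht (fun x => abs_nonneg _) ?_
    filter_upwards [ae_restrict_mem (measurableSet_toMeasurable μ _).compl] with x hx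
    exact not_lt.mp fun h => hx (subset_toMeasurable μ _ h)
  calc essSup (fun x => |f x|) μ
      ≤ R * essSup (fun x => |f x|) (μ.restrict Bᶜ) :=
        hRem B (measurableSet_toMeasurable μ _) (by rwa [measure_toMeasurable])
    _ ≤ R * t := mul_le_mul_of_nonneg_left h_off hR

end

theorem remez_infty_implies_nikolskii_general
    {Ω : Type*} [MeasurableSpace Ω] (μ : Measure Ω) [IsProbabilityMeasure μ]
    (f : Ω → ℝ) (b R : ℝ) (hb : 0 < b) (hR : 1 ≤ R)
    (hf : MemLp f ⊤ μ)
    (hRem : ∀ B : Set Ω, MeasurableSet B → μ B ≤ ENNReal.ofReal b →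
      essSup (fun x => |f x|) μ ≤ R * essSup (fun x => |f x|) (μ.restrict Bᶜ)) :
    ∀ q : ℝ, 0 < q →
      essSup (fun x => |f x|) μ ≤ R * b ^ (-(1 / q)) * (∫ x, |f x| ^ q ∂μ) ^ (1 / q) := by
  intro q hq
  set I := ∫ x, |f x| ^ q ∂μ
  have h_int : Integrable (fun x => |f x| ^ q) μ := by
    simpa [hq.le] using (hf.mono_exponent (p := ENNReal.ofReal q) le_top).integrable_norm_rpow'
  have hI : 0 ≤ I := integral_nonneg fun x => rpow_nonneg (abs_nonneg _) q
  have h_level : {x | (I / b) ^ q⁻¹ < |f x|} = {x | I / b < |f x| ^ q} := by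
    ext x
    exact rpow_inv_lt_iff_of_pos (div_nonneg hI hb.le) (abs_nonneg _) hq
  calc essSup (fun x => |f x|) μ ≤ R * (I / b) ^ q⁻¹ := by
        refine essSup_abs_le_of_remez (by linarith) (by positivity) hRem ?_
        rw [h_level]
        exact measure_integral_div_lt_le (ae_of_all _ fun x => rpow_nonneg (abs_nonneg _) q)
          h_int hb
    _ = R * b ^ (-(1 / q)) * I ^ (1 / q) := by
        rw [div_rpow hI hb.le, rpow_neg hb.le, one_div]
        ring

/-- the L_∞ Remez inequality with parameters b, R implies the
Nikolskii inequality ‖f‖_∞ ≤ R b^{-1/q} ‖f‖_q for every 0 < q < ∞. -/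
theorem remez_infty_implies_nikolskii
    {Ω : Type*} [MeasurableSpace Ω] (μ : Measure Ω) [IsProbabilityMeasure μ]
    (f : Ω → ℝ) (b R : ℝ) (hb : 0 < b) (hb1 : b ≤ 1) (hR : 1 ≤ R)
    (hf : MemLp f ⊤ μ)
    (hRem : ∀ B : Set Ω, MeasurableSet B → μ B ≤ ENNReal.ofReal b →
      essSup (fun x => |f x|) μ ≤ R * essSup (fun x => |f x|) (μ.restrict Bᶜ)) :
    ∀ q : ℝ, 0 < q →
      essSup (fun x => |f x|) μ ≤ R * b ^ (-(1 / q)) * (∫ x, |f x| ^ q ∂μ) ^ (1 / q) :=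
  remez_infty_implies_nikolskii_general μ f b R hb hR hf hRem
end

section
/- Let (Ω, μ) be a probability measure space, 0 < q < p < ∞, and suppose f satisfies the L_p Remez inequality with parameters b and R: for every measurable B ⊆ Ω with μ(B) ≤ b, ‖f‖_{L_p(Ω)} ≤ R ‖f‖_{L_p(Ω∖B)}. Then the Nikolskii-type inequality ‖f‖_{L_p(Ω)} ≤ R b^{−β} ‖f‖_{L_q(Ω)} holds with β = 1/q − 1/p. -/
open MeasureTheory Real

/-!
Take the level `t = (‖f‖_q^q / b)^(1/q)`. By Chebyshev's inequality the set `B` where `|f| > t`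
has measure at most `b`, and on its complement `|f|^p ≤ t^(p-q) |f|^q`, so
`‖f‖_{L_p(Bᶜ)}^p ≤ t^(p-q) ‖f‖_q^q`. The Remez inequality for this `B` gives
`‖f‖_p ≤ R (t^(p-q) ‖f‖_q^q)^(1/p) = R b^(1/p - 1/q) ‖f‖_q`.
-/

section

variable {Ω : Type*} [MeasurableSpace Ω] {μ : Measure Ω} {f : Ω → ℝ} {p q b t R : ℝ}

def SatisfiesRemez (μ : Measure Ω) (f : Ω → ℝ) (p b R : ℝ) : Prop :=
  ∀ B : Set Ω, MeasurableSet B → μ B ≤ ENNReal.ofReal b →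
    (∫ x, |f x| ^ p ∂μ) ^ (1 / p) ≤ R * (∫ x in Bᶜ, |f x| ^ p ∂μ) ^ (1 / p)

theorem Real.rpow_le_rpow_sub_mul_rpow {x : ℝ} (hx : 0 ≤ x) (hxt : x ≤ t) (hp : 0 < p)
    (hqp : q ≤ p) : x ^ p ≤ t ^ (p - q) * x ^ q := by
  calc x ^ p = x ^ (p - q) * x ^ q := by
        rw [← rpow_add' hx (by rw [sub_add_cancel]; exact hp.ne'), sub_add_cancel]
    _ ≤ t ^ (p - q) * x ^ q := by gcongr

theorem measure_lt_abs_le_of_integral_rpow_le [IsFiniteMeasure μ] (hq : 0 < q) (ht : 0 < t)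
    (hint : Integrable (fun x => |f x| ^ q) μ) (hI : ∫ x, |f x| ^ q ∂μ ≤ b * t ^ q) :
    μ {x | t < |f x|} ≤ ENNReal.ofReal b := by
  have htq : 0 < t ^ q := rpow_pos_of_pos ht q
  have hmarkov := mul_meas_ge_le_integral_of_nonneg (ae_of_all _ fun x => by positivity) hint
    (t ^ q)
  have hsub : {x | t < |f x|} ⊆ {x | t ^ q ≤ |f x| ^ q} := fun x hx =>
    rpow_le_rpow ht.le (le_of_lt hx) hq.le
  calc μ {x | t < |f x|} ≤ μ {x | t ^ q ≤ |f x| ^ q} := measure_mono hsub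
    _ = ENNReal.ofReal (μ.real {x | t ^ q ≤ |f x| ^ q}) := (ofReal_measureReal).symm
    _ ≤ ENNReal.ofReal b := ENNReal.ofReal_le_ofReal (by nlinarith)

theorem setIntegral_abs_rpow_le_of_abs_le {S : Set Ω} (hS : MeasurableSet S)
    (hfS : ∀ x ∈ S, |f x| ≤ t) (hp : 0 < p) (hqp : q ≤ p)
    (hint : Integrable (fun x => |f x| ^ q) μ) :
    ∫ x in S, |f x| ^ p ∂μ ≤ t ^ (p - q) * ∫ x in S, |f x| ^ q ∂μ := by
  rw [← integral_const_mul]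
  refine integral_mono_of_nonneg (ae_of_all _ fun x => by positivity)
    (hint.const_mul _).integrableOn (ae_restrict_of_forall_mem hS fun x hx => ?_)
  exact rpow_le_rpow_sub_mul_rpow (abs_nonneg _) (hfS x hx) hp hqp

theorem SatisfiesRemez.rpow_integral_le [IsFiniteMeasure μ] (hRem : SatisfiesRemez μ f p b R)
    (hq : 0 < q) (hqp : q ≤ p) (hR : 0 ≤ R) (ht : 0 < t)
    (hint : Integrable (fun x => |f x| ^ q) μ) (hI : ∫ x, |f x| ^ q ∂μ ≤ b * t ^ q) :
    (∫ x, |f x| ^ p ∂μ) ^ (1 / p) ≤ R * (t ^ (p - q) * ∫ x, |f x| ^ q ∂μ) ^ (1 / p) := by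
  have hp : 0 < p := hq.trans_le hqp
  -- `f` need not be measurable, so pass to a measurable hull of the superlevel set.
  set B := toMeasurable μ {x | t < |f x|}
  have hB : MeasurableSet B := measurableSet_toMeasurable _ _
  have hμB : μ B ≤ ENNReal.ofReal b := by
    rw [measure_toMeasurable]
    exact measure_lt_abs_le_of_integral_rpow_le hq ht hint hI
  have hBc : ∀ x ∈ Bᶜ, |f x| ≤ t := fun x hx =>
    not_lt.1 fun hlt => hx (subset_toMeasurable _ _ hlt)
  calc (∫ x, |f x| ^ p ∂μ) ^ (1 / p) ≤ R * (∫ x in Bᶜ, |f x| ^ p ∂μ) ^ (1 / p) :=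
        hRem B hB hμB
    _ ≤ R * (t ^ (p - q) * ∫ x, |f x| ^ q ∂μ) ^ (1 / p) := by
        gcongr
        calc ∫ x in Bᶜ, |f x| ^ p ∂μ ≤ t ^ (p - q) * ∫ x in Bᶜ, |f x| ^ q ∂μ :=
              setIntegral_abs_rpow_le_of_abs_le hB.compl hBc hp hqp hint
          _ ≤ t ^ (p - q) * ∫ x, |f x| ^ q ∂μ := by
              gcongr ?_ * ?_
              exact setIntegral_le_integral hint (ae_of_all _ fun x => by positivity)

theorem Real.rpow_div_rpow_one_div_rpow_sub_mul {I : ℝ} (hI : 0 < I) (hb : 0 < b) (hq : 0 < q)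
    (hp : 0 < p) :
    (((I / b) ^ (1 / q)) ^ (p - q) * I) ^ (1 / p) = b ^ (-(1 / q - 1 / p)) * I ^ (1 / q) := by
  have hIb : 0 < I / b := div_pos hI hb
  rw [← rpow_mul hIb.le, div_rpow hI.le hb.le, div_eq_mul_inv, ← rpow_neg hb.le,
    mul_right_comm, ← rpow_add_one hI.ne', mul_rpow (by positivity) (by positivity),
    ← rpow_mul hI.le, ← rpow_mul hb.le, mul_comm]
  congr 2 <;> field_simp; ring

end

theorem remez_p_implies_nikolskii_general
    {Ω : Type*} [MeasurableSpace Ω] (μ : Measure Ω) [IsProbabilityMeasure μ]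
    (f : Ω → ℝ) (p q : ℝ) (hq : 0 < q) (hqp : q < p) (b R : ℝ)
    (hb : 0 < b) (hR : 1 < R)
    (hf : MemLp f (ENNReal.ofReal p) μ)
    (hRem : ∀ B : Set Ω, MeasurableSet B → μ B ≤ ENNReal.ofReal b →
      (∫ x, |f x| ^ p ∂μ) ^ (1 / p) ≤ R * (∫ x in Bᶜ, |f x| ^ p ∂μ) ^ (1 / p)) :
    (∫ x, |f x| ^ p ∂μ) ^ (1 / p) ≤
      R * b ^ (-(1 / q - 1 / p)) * (∫ x, |f x| ^ q ∂μ) ^ (1 / q) := by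
  have hp : 0 < p := hq.trans hqp
  have hRemez : SatisfiesRemez μ f p b R := hRem
  have hint : Integrable (fun x => |f x| ^ q) μ := by
    simpa [ENNReal.toReal_ofReal hq.le] using
      (hf.mono_exponent (ENNReal.ofReal_le_ofReal hqp.le)).integrable_norm_rpow'
  rcases (integral_nonneg fun x => by positivity : 0 ≤ ∫ x, |f x| ^ q ∂μ).eq_or_lt with hI | hI
  · -- Every level `t > 0` is admissible here.
    have h := hRemez.rpow_integral_le hq hqp.le (by linarith) one_pos hint
      (by simp [← hI, hb.le])
    rw [← hI, zero_rpow (one_div_pos.2 hq).ne', mul_zero]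
    rwa [← hI, mul_zero, zero_rpow (one_div_pos.2 hp).ne', mul_zero] at h
  · set t := ((∫ x, |f x| ^ q ∂μ) / b) ^ (1 / q)
    have hbt : ∫ x, |f x| ^ q ∂μ = b * t ^ q := by
      rw [← rpow_mul (div_pos hI hb).le, one_div_mul_cancel hq.ne', rpow_one,
        mul_div_cancel₀ _ hb.ne']
    have h := hRemez.rpow_integral_le hq hqp.le (by linarith) (by positivity) hint hbt.le
    rwa [Real.rpow_div_rpow_one_div_rpow_sub_mul hI hb hq hp, ← mul_assoc] at h

/-- the L_p Remez inequality with parameters b, R implies the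
Nikolskii inequality ‖f‖_p ≤ R b^{-β} ‖f‖_q, β = 1/q - 1/p, for 0 < q < p < ∞. -/
theorem remez_p_implies_nikolskii
    {Ω : Type*} [MeasurableSpace Ω] (μ : Measure Ω) [IsProbabilityMeasure μ]
    (f : Ω → ℝ) (p q : ℝ) (hq : 0 < q) (hqp : q < p) (b R : ℝ)
    (hb : 0 < b) (hb1 : b ≤ 1) (hR : 1 < R)
    (hf : MemLp f (ENNReal.ofReal p) μ)
    (hRem : ∀ B : Set Ω, MeasurableSet B → μ B ≤ ENNReal.ofReal b →
      (∫ x, |f x| ^ p ∂μ) ^ (1 / p) ≤ R * (∫ x in Bᶜ, |f x| ^ p ∂μ) ^ (1 / p)) :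
    (∫ x, |f x| ^ p ∂μ) ^ (1 / p) ≤
      R * b ^ (-(1 / q - 1 / p)) * (∫ x, |f x| ^ q ∂μ) ^ (1 / q) :=
  remez_p_implies_nikolskii_general μ f p q hq hqp b R hb hR hf hRem
end

section
/- Let (Ω, μ) be a probability measure space, 1 ≤ q < p ≤ ∞, β = 1/q − 1/p, and suppose f satisfies the Nikolskii inequality ‖f‖_{L_p(Ω)} ≤ K ‖f‖_{L_q(Ω)} for some constant K > 0. Then for every measurable set B ⊆ Ω with μ(B) ≤ (2K)^{−1/β}, one has ‖f‖_{L_q(Ω)} ≤ 2 ‖f‖_{L_q(Ω∖B)}. -/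
/-!
On a set `B` Hölder's inequality gives `‖f‖_{L_q(B)} ≤ ‖f‖_p μ(B)^β`, and the Nikolskii inequality
turns this into `‖f‖_{L_q(B)} ≤ K μ(B)^β ‖f‖_q ≤ ‖f‖_q / 2` once `μ(B) ≤ (2K)^{-1/β}`. Then
`‖f‖_q ≤ ‖f‖_{L_q(B)} + ‖f‖_{L_q(Bᶜ)} ≤ ‖f‖_q / 2 + ‖f‖_{L_q(Bᶜ)}`, and `‖f‖_q` is finite, so
it can be absorbed into the left-hand side.
-/

open MeasureTheory Real
open scoped ENNReal

namespace ENNReal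

theorem one_div_toReal_sub_one_div_toReal_pos {p q : ℝ≥0∞} (hq : q ≠ 0) (hqp : q < p) :
    0 < 1 / q.toReal - 1 / p.toReal := by
  rw [sub_pos, one_div, one_div, ← toReal_inv, ← toReal_inv]
  exact (toReal_lt_toReal (inv_ne_top.mpr (pos_of_gt hqp).ne') (inv_ne_top.mpr hq)).mpr
    (ENNReal.inv_lt_inv.mpr hqp)

theorem ofReal_mul_rpow_le_inv_two {K β : ℝ} {x : ℝ≥0∞} (hK : 0 < K) (hβ : 0 < β)
    (hx : x ≤ ENNReal.ofReal ((2 * K) ^ (-(1 / β)))) :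
    ENNReal.ofReal K * x ^ β ≤ 2⁻¹ := by
  have h2K : 0 < 2 * K := by positivity
  have hxβ : x ^ β ≤ ENNReal.ofReal (2 * K)⁻¹ :=
    calc x ^ β ≤ ENNReal.ofReal ((2 * K) ^ (-(1 / β))) ^ β := rpow_le_rpow hx hβ.le
      _ = ENNReal.ofReal (2 * K)⁻¹ := by
        rw [ofReal_rpow_of_pos (rpow_pos_of_pos h2K _), ← Real.rpow_mul h2K.le,
          neg_mul, one_div_mul_cancel hβ.ne', Real.rpow_neg_one]
  calc ENNReal.ofReal K * x ^ β ≤ ENNReal.ofReal K * ENNReal.ofReal (2 * K)⁻¹ := by gcongr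
    _ = 2⁻¹ := by
      rw [← ofReal_mul hK.le, mul_inv, ← mul_assoc, mul_comm K, mul_assoc,
        mul_inv_cancel₀ hK.ne', mul_one, ofReal_inv_of_pos two_pos, ofReal_ofNat]

theorem le_two_mul_of_le_inv_two_mul_add {a b : ℝ≥0∞} (ha : a ≠ ∞) (h : a ≤ 2⁻¹ * a + b) :
    a ≤ 2 * b := by
  have hhalf : a / 2 ≤ b := by
    refine ENNReal.le_of_add_le_add_left (div_ne_top ha two_ne_zero) ?_
    rwa [ENNReal.add_halves, ENNReal.div_eq_inv_mul]
  calc a = 2 * (a / 2) := (ENNReal.mul_div_cancel two_ne_zero ofNat_ne_top).symm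
    _ ≤ 2 * b := by gcongr

end ENNReal

namespace MeasureTheory

variable {Ω E : Type*} [MeasurableSpace Ω] [NormedAddCommGroup E] {μ : Measure Ω} {f : Ω → E}

theorem eLpNorm_le_eLpNorm_restrict_add_eLpNorm_restrict_compl {q : ℝ≥0∞} (hq : 1 ≤ q)
    (hf : AEStronglyMeasurable f μ) {B : Set Ω} (hB : MeasurableSet B) :
    eLpNorm f q μ ≤ eLpNorm f q (μ.restrict B) + eLpNorm f q (μ.restrict Bᶜ) := by
  rw [← eLpNorm_indicator_eq_eLpNorm_restrict hB,
    ← eLpNorm_indicator_eq_eLpNorm_restrict hB.compl]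
  conv_lhs => rw [← Set.indicator_self_add_compl B f]
  exact eLpNorm_add_le (hf.indicator hB) (hf.indicator hB.compl) hq

theorem eLpNorm_restrict_le_eLpNorm_mul_rpow_measure {p q : ℝ≥0∞} (hqp : q ≤ p)
    (hf : AEStronglyMeasurable f μ) (B : Set Ω) :
    eLpNorm f q (μ.restrict B) ≤ eLpNorm f p μ * μ B ^ (1 / q.toReal - 1 / p.toReal) :=
  calc eLpNorm f q (μ.restrict B)
      ≤ eLpNorm f p (μ.restrict B) * μ.restrict B Set.univ ^ (1 / q.toReal - 1 / p.toReal) :=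
        eLpNorm_le_eLpNorm_mul_rpow_measure_univ hqp hf.restrict
    _ ≤ eLpNorm f p μ * μ B ^ (1 / q.toReal - 1 / p.toReal) := by
        rw [Measure.restrict_apply_univ]
        gcongr
        exact Measure.restrict_le_self

end MeasureTheory

/-- the Nikolskii inequality ‖f‖_p ≤ K ‖f‖_q (1 ≤ q < p ≤ ∞) implies
the L_q Remez inequality with parameters (2K)^{-1/β} and 2, where β = 1/q - 1/p. -/
theorem nikolskii_implies_remez
    {Ω : Type*} [MeasurableSpace Ω] (μ : Measure Ω) [IsProbabilityMeasure μ]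
    (f : Ω → ℝ) (p q : ℝ≥0∞) (hq : 1 ≤ q) (hqp : q < p) (K : ℝ) (hK : 0 < K)
    (hf : MemLp f p μ)
    (hN : eLpNorm f p μ ≤ ENNReal.ofReal K * eLpNorm f q μ) :
    ∀ B : Set Ω, MeasurableSet B →
      μ B ≤ ENNReal.ofReal ((2 * K) ^ (-(1 / (1 / q.toReal - 1 / p.toReal)))) →
      eLpNorm f q μ ≤ 2 * eLpNorm f q (μ.restrict Bᶜ) := by
  intro B hB hμB
  set β := 1 / q.toReal - 1 / p.toReal
  have hβ : 0 < β :=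
    ENNReal.one_div_toReal_sub_one_div_toReal_pos (one_pos.trans_le hq).ne' hqp
  have hsmall : eLpNorm f q (μ.restrict B) ≤ 2⁻¹ * eLpNorm f q μ :=
    calc eLpNorm f q (μ.restrict B) ≤ eLpNorm f p μ * μ B ^ β :=
          eLpNorm_restrict_le_eLpNorm_mul_rpow_measure hqp.le hf.aestronglyMeasurable B
      _ ≤ ENNReal.ofReal K * eLpNorm f q μ * μ B ^ β := by gcongr
      _ = ENNReal.ofReal K * μ B ^ β * eLpNorm f q μ := mul_right_comm _ _ _
      _ ≤ 2⁻¹ * eLpNorm f q μ := by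
          gcongr
          exact ENNReal.ofReal_mul_rpow_le_inv_two hK hβ hμB
  refine ENNReal.le_two_mul_of_le_inv_two_mul_add (hf.mono_exponent hqp.le).eLpNorm_ne_top ?_
  calc eLpNorm f q μ ≤ eLpNorm f q (μ.restrict B) + eLpNorm f q (μ.restrict Bᶜ) :=
        eLpNorm_le_eLpNorm_restrict_add_eLpNorm_restrict_compl hq hf.aestronglyMeasurable hB
    _ ≤ 2⁻¹ * eLpNorm f q μ + eLpNorm f q (μ.restrict Bᶜ) := by gcongr
end

section
/- Let f be a continuous 2π-periodic function on the torus 𝕋^d with normalized Haar (Lebesgue) measure μ, and suppose there exist points x^1, …, x^m ∈ 𝕋^d and a constant D such that for every y ∈ 𝕋^d the translated function f_y(x) = f(x − y) satisfies ‖f_y‖_∞ ≤ D max_{1≤j≤m} |f_y(x^j)|. Then for every measurable set B ⊆ 𝕋^d with μ(B) < 1/m, one has ‖f‖_∞ ≤ D sup_{x ∈ 𝕋^d ∖ B} |f(x)|. -/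
open MeasureTheory Real
open scoped ENNReal

/-!
A point `x j + w` lies in `B` only if `w` lies in the translate `-x j + B`, and these `m`
translates cover measure at most `m μ(B) < 1`; so some `w` puts all the points `x j + w` in `Bᶜ`. The discretization inequality at
`y = -w` bounds `‖f‖_∞ = ‖f_y‖_∞` by `D` times the values of `|f|` at the points `x j + w ∈ Bᶜ`.
-/

open Set

theorem exists_forall_add_notMem_of_card_mul_measure_lt {G ι : Type*} [AddGroup G]
    [MeasurableSpace G] [MeasurableAdd G] [Fintype ι] (μ : Measure G) [μ.IsAddLeftInvariant]
    (x : ι → G) {B : Set G} (hB : Fintype.card ι * μ B < μ univ) :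
    ∃ w, ∀ j, x j + w ∉ B := by
  by_contra! hcover
  have : μ univ ≤ Fintype.card ι * μ B :=
    calc μ univ ≤ μ (⋃ j, (x j + ·) ⁻¹' B) :=
          measure_mono fun w _ ↦ mem_iUnion.2 (hcover w)
      _ ≤ ∑ j, μ ((x j + ·) ⁻¹' B) := measure_iUnion_fintype_le μ _
      _ = Fintype.card ι * μ B := by simp [measure_preimage_add]
  exact this.not_gt hB

namespace Real

variable {β : Type*} {g : β → ℝ} {S : Set β}

theorem le_biSup (hg : BddAbove (g '' S)) (hg0 : ∀ u ∈ S, 0 ≤ g u) {u : β} (hu : u ∈ S) :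
    g u ≤ ⨆ v ∈ S, g v := by
  have hS0 : 0 ≤ ⨆ v : S, g v := Real.iSup_nonneg fun v ↦ hg0 v v.2
  rw [← ciSup_subtype_fun (by rwa [← image_eq_range]) (by simpa using hS0)]
  exact le_ciSup_set hg hu

theorem biSup_nonneg (hg0 : ∀ u ∈ S, 0 ≤ g u) : 0 ≤ ⨆ v ∈ S, g v :=
  Real.iSup_nonneg fun v ↦ Real.iSup_nonneg fun hv ↦ hg0 v hv

theorem iSup_comp_le_biSup {ι : Type*} (hg : BddAbove (g '' S)) (hg0 : ∀ u ∈ S, 0 ≤ g u)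
    {x : ι → β} (hx : ∀ j, x j ∈ S) : ⨆ j, g (x j) ≤ ⨆ v ∈ S, g v :=
  Real.iSup_le (fun j ↦ le_biSup hg hg0 (hx j)) (biSup_nonneg hg0)

theorem biSup_le_iSup (hg : BddAbove (range g)) (hg0 : ∀ u, 0 ≤ g u) :
    ⨆ v ∈ S, g v ≤ ⨆ v, g v :=
  ciSup_mono hg fun v ↦ Real.iSup_le (fun _ ↦ le_rfl) (hg0 v)

end Real

theorem iSup_abs_le_mul_biSup_compl_of_forall_translate {G ι : Type*} [AddGroup G]
    [MeasurableSpace G] [MeasurableAdd G] [Fintype ι] (μ : Measure G) [μ.IsAddLeftInvariant]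
    {f : G → ℝ} (hf : BddAbove (range fun z ↦ |f z|)) (x : ι → G) {D : ℝ}
    (hD : ∀ y, (⨆ z, |f (z - y)|) ≤ D * ⨆ j, |f (x j - y)|)
    {B : Set G} (hB : Fintype.card ι * μ B < μ univ) :
    (⨆ z, |f z|) ≤ D * ⨆ u ∈ Bᶜ, |f u| := by
  obtain ⟨w, hw⟩ := exists_forall_add_notMem_of_card_mul_measure_lt μ x hB
  have hM : (⨆ z, |f z|) ≤ D * ⨆ j, |f (x j + w)| := by
    rw [← (Equiv.addRight w).iSup_comp]
    simpa using hD (-w)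
  have hxS : ⨆ j, |f (x j + w)| ≤ ⨆ u ∈ Bᶜ, |f u| :=
    Real.iSup_comp_le_biSup (hf.mono (image_subset_range _ _)) (fun _ _ ↦ abs_nonneg _) hw
  have hSM : ⨆ u ∈ Bᶜ, |f u| ≤ ⨆ z, |f z| := Real.biSup_le_iSup hf fun _ ↦ abs_nonneg _
  have hx0 : 0 ≤ ⨆ j, |f (x j + w)| := Real.iSup_nonneg fun _ ↦ abs_nonneg _
  have hS0 : 0 ≤ ⨆ u ∈ Bᶜ, |f u| := Real.biSup_nonneg fun _ _ ↦ abs_nonneg _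
  rcases le_or_gt 0 D with hD0 | hD0
  · exact hM.trans (mul_le_mul_of_nonneg_left hxS hD0)
  · -- a negative `D` forces `f = 0`
    have hM0 : (⨆ z, |f z|) ≤ 0 := hM.trans (mul_nonpos_of_nonpos_of_nonneg hD0.le hx0)
    rwa [le_antisymm (hSM.trans hM0) hS0, mul_zero]

theorem discretization_implies_remez_general
    {d : ℕ} (μ : Measure (Fin d → AddCircle (2 * π))) [IsProbabilityMeasure μ]
    [μ.IsAddLeftInvariant]
    (f : (Fin d → AddCircle (2 * π)) → ℝ) (hf : Continuous f)
    (m : ℕ) (x : Fin m → (Fin d → AddCircle (2 * π))) (D : ℝ)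
    (hD : ∀ y : Fin d → AddCircle (2 * π),
      (⨆ z, |f (z - y)|) ≤ D * ⨆ j, |f (x j - y)|) :
    ∀ B : Set (Fin d → AddCircle (2 * π)), MeasurableSet B → μ B < 1 / (m : ℝ≥0∞) →
      (⨆ z, |f z|) ≤ D * ⨆ u ∈ Bᶜ, |f u| := by
  have : Fact (0 < 2 * π) := ⟨by positivity⟩
  intro B _ hμB
  refine iSup_abs_le_mul_biSup_compl_of_forall_translate μ (isCompact_range hf.abs).bddAbove x hD ?_
  simpa [mul_comm] using ENNReal.mul_lt_of_lt_div hμB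

/-- a discretization inequality for all translates of a continuous
function f on the torus 𝕋^d implies a Remez-type inequality for f. -/
theorem discretization_implies_remez
    {d : ℕ} (μ : Measure (Fin d → AddCircle (2 * π))) [IsProbabilityMeasure μ]
    [μ.IsAddLeftInvariant] [μ.IsNegInvariant]
    (f : (Fin d → AddCircle (2 * π)) → ℝ) (hf : Continuous f)
    (m : ℕ) (x : Fin m → (Fin d → AddCircle (2 * π))) (D : ℝ)
    (hD : ∀ y : Fin d → AddCircle (2 * π),
      (⨆ z, |f (z - y)|) ≤ D * ⨆ j, |f (x j - y)|) :
    ∀ B : Set (Fin d → AddCircle (2 * π)), MeasurableSet B → μ B < 1 / (m : ℝ≥0∞) →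
      (⨆ z, |f z|) ≤ D * ⨆ u ∈ Bᶜ, |f u| :=
  discretization_implies_remez_general μ f hf m x D hD
end

section
/- Let Γ(N) = {k ∈ ℤ^d : ∏_{j=1}^d max(1, |k_j|) ≤ N} be the hyperbolic cross and 𝒯(N) the space of trigonometric polynomials with frequencies in Γ(N). Suppose V is a (de la Vallée Poussin type) kernel with ‖V‖_{L_1(𝕋^d)} ≤ C' and ‖V‖_{L_∞(𝕋^d)} ≤ C'' such that f = f * V for all f ∈ 𝒯(N). Then for every measurable set B ⊆ 𝕋^d with normalized measure |B| ≤ (2C'')^{−1} and every f ∈ 𝒯(N), one has ‖f‖_∞ ≤ 2C' · sup_{u ∈ 𝕋^d ∖ B} |f(u)|. -/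
/-!
With `M = sup |f|` and `m = sup_{𝕋^d ∖ B} |f|`, the reproducing formula gives
`|f x| ≤ ∫_B |f u| |V (x - u)| du + ∫_{Bᶜ} |f u| |V (x - u)| du ≤ |B| C'' M + C' m ≤ M / 2 + C' m`,
and taking the supremum over `x` absorbs `M / 2`, so `M ≤ 2 C' m`. For `N ≥ 1` the constant `1`
lies in `𝒯(N)`, and reproducing it makes `V` integrable; `𝒯(0)` is trivial.
-/

open MeasureTheory Real
open scoped ENNReal

namespace RemezHC

noncomputable section

instance : Fact (0 < 2 * π) := ⟨by positivity⟩

variable {d : ℕ}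

/-- The d-dimensional torus 𝕋^d. -/
abbrev Torus (d : ℕ) := Fin d → AddCircle (2 * π)

/-- Normalized (probability) Haar measure on 𝕋^d. -/
def torusMeasure (d : ℕ) : Measure (Torus d) :=
  Measure.pi fun _ => AddCircle.haarAddCircle

/-- Membership in the space 𝒯(N) of trigonometric polynomials with frequencies
in the hyperbolic cross Γ(N) = {k : ∏ⱼ max(1, |kⱼ|) ≤ N}. -/
def IsHCPoly (d N : ℕ) (f : Torus d → ℂ) : Prop :=
  ∃ (S : Finset (Fin d → ℤ)) (c : (Fin d → ℤ) → ℂ),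
    (∀ k ∈ S, (∏ j, max 1 |k j| : ℤ) ≤ (N : ℤ)) ∧
    f = fun x => ∑ k ∈ S, c k * ∏ j, fourier (k j) (x j)

instance : IsProbabilityMeasure (torusMeasure d) := by
  unfold torusMeasure; infer_instance

instance : (torusMeasure d).IsAddLeftInvariant := Measure.pi.isAddLeftInvariant _

instance : (torusMeasure d).IsNegInvariant := Measure.pi.isNegInvariant _

theorem IsHCPoly.bddAbove_norm {N : ℕ} {f : Torus d → ℂ} (hf : IsHCPoly d N f) :
    BddAbove (Set.range fun x => ‖f x‖) := by
  obtain ⟨S, c, -, rfl⟩ := hf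
  refine ⟨∑ k ∈ S, ‖c k‖, Set.forall_mem_range.2 fun x => ?_⟩
  refine (norm_sum_le _ _).trans (Finset.sum_le_sum fun k _ => ?_)
  simp [fourier_apply, Circle.norm_coe]

theorem IsHCPoly.eq_zero_of_zero {f : Torus d → ℂ} (hf : IsHCPoly d 0 f) : f = 0 := by
  obtain ⟨S, c, hS, rfl⟩ := hf
  funext x
  refine Finset.sum_eq_zero fun k hk => absurd (hS k hk) (not_le.2 ?_)
  exact Finset.prod_pos fun j _ => zero_lt_one.trans_le (le_max_left _ _)

theorem isHCPoly_one {N : ℕ} (hN : 0 < N) : IsHCPoly d N fun _ => 1 :=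
  ⟨{0}, fun _ => 1, by simpa using Nat.succ_le_of_lt hN, by simp⟩

/-- A non-integrable function has Bochner integral `0`. -/
theorem integrable_of_reproduces_one {G : Type*} [MeasurableSpace G] [AddGroup G]
    [MeasurableAdd G] [MeasurableNeg G] {μ : Measure G} [μ.IsAddLeftInvariant] [μ.IsNegInvariant]
    {V : G → ℂ} {x : G} (h : (1 : ℂ) = ∫ u, 1 * V (x - u) ∂μ) : Integrable V μ := by
  refine (integrable_comp_sub_left V x).1 (Integrable.of_integral_ne_zero ?_)
  simp only [one_mul] at h
  exact h ▸ one_ne_zero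

theorem norm_integral_mul_le_of_bound_compl {α : Type*} [MeasurableSpace α] {μ : Measure α}
    [IsFiniteMeasure μ] {f K : α → ℂ} {B : Set α} (hB : MeasurableSet B) {M m C : ℝ} (hm : 0 ≤ m)
    (hfM : ∀ u, ‖f u‖ ≤ M) (hfm : ∀ u ∉ B, ‖f u‖ ≤ m) (hK : Integrable K μ)
    (hKC : ∀ u, ‖K u‖ ≤ C) :
    ‖∫ u, f u * K u ∂μ‖ ≤ μ.real B * (M * C) + m * ∫ u, ‖K u‖ ∂μ := by
  have hmaj : Integrable (fun u => B.indicator (fun _ => M * C) u + m * ‖K u‖) μ :=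
    ((integrable_const _).indicator hB).add (hK.norm.const_mul m)
  calc ‖∫ u, f u * K u ∂μ‖
      _ ≤ ∫ u, ‖f u * K u‖ ∂μ := norm_integral_le_integral_norm _
      _ ≤ ∫ u, (B.indicator (fun _ => M * C) u + m * ‖K u‖) ∂μ := by
        refine integral_mono_of_nonneg (.of_forall fun _ => norm_nonneg _) hmaj
          (.of_forall fun u => ?_)
        dsimp only
        rw [norm_mul]
        by_cases hu : u ∈ B
        · rw [Set.indicator_of_mem hu]
          have hM : 0 ≤ M := (norm_nonneg _).trans (hfM u)
          exact (mul_le_mul (hfM u) (hKC u) (norm_nonneg _) hM).trans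
            (le_add_of_nonneg_right (by positivity))
        · rw [Set.indicator_of_notMem hu, zero_add]
          exact mul_le_mul_of_nonneg_right (hfm u hu) (norm_nonneg _)
      _ = μ.real B * (M * C) + m * ∫ u, ‖K u‖ ∂μ := by
        rw [integral_add ((integrable_const _).indicator hB) (hK.norm.const_mul m),
          integral_indicator_const _ hB, integral_const_mul, smul_eq_mul]

theorem le_biSup_of_bddAbove {α : Type*} {g : α → ℝ} (hg : BddAbove (Set.range g))
    (hg0 : ∀ u, 0 ≤ g u) {s : Set α} {u : α} (hu : u ∈ s) : g u ≤ ⨆ v ∈ s, g v := by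
  obtain ⟨b, hb⟩ := hg
  have hbdd : BddAbove (Set.range fun v => ⨆ _ : v ∈ s, g v) :=
    ⟨b, Set.forall_mem_range.2 fun v =>
      Real.iSup_le (fun _ => hb ⟨v, rfl⟩) ((hg0 v).trans (hb ⟨v, rfl⟩))⟩
  exact (ciSup_pos hu).symm.le.trans (le_ciSup hbdd u)

theorem measureReal_mul_le_half {α : Type*} [MeasurableSpace α] {μ : Measure α} {s : Set α}
    {C : ℝ} (hC : 0 < C) (hs : μ s ≤ ENNReal.ofReal (1 / (2 * C))) : μ.real s * C ≤ 1 / 2 :=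
  calc μ.real s * C ≤ 1 / (2 * C) * C := by
        gcongr; exact ENNReal.toReal_le_of_le_ofReal (by positivity) hs
    _ = 1 / 2 := by field_simp

/-- Remez inequality for hyperbolic cross polynomials via a
reproducing de la Vallée Poussin type kernel. -/
theorem remez_hyperbolic_cross
    (N : ℕ) (f : Torus d → ℂ) (hf : IsHCPoly d N f)
    (V : Torus d → ℂ) (C' C'' : ℝ) (hC' : 0 < C') (hC'' : 0 < C'')
    (hV1 : ∫ u, ‖V u‖ ∂(torusMeasure d) ≤ C')
    (hVinf : ∀ u, ‖V u‖ ≤ C'')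
    (hrep : ∀ g : Torus d → ℂ, IsHCPoly d N g →
      ∀ x, g x = ∫ u, g u * V (x - u) ∂(torusMeasure d))
    (B : Set (Torus d)) (hB : MeasurableSet B)
    (hBm : torusMeasure d B ≤ ENNReal.ofReal (1 / (2 * C''))) :
    (⨆ x, ‖f x‖) ≤ 2 * C' * ⨆ u ∈ Bᶜ, ‖f u‖ := by
  set M := ⨆ x, ‖f x‖
  set m := ⨆ u ∈ Bᶜ, ‖f u‖
  have hfM : ∀ x, ‖f x‖ ≤ M := le_ciSup hf.bddAbove_norm
  have hM : 0 ≤ M := (norm_nonneg _).trans (hfM 0)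
  have hfm : ∀ u ∉ B, ‖f u‖ ≤ m := fun u hu =>
    le_biSup_of_bddAbove hf.bddAbove_norm (fun _ => norm_nonneg _) hu
  have hm : 0 ≤ m := Real.iSup_nonneg fun _ => Real.iSup_nonneg fun _ => norm_nonneg _
  have hBC := measureReal_mul_le_half hC'' hBm
  have hpointwise : ∀ x, ‖f x‖ ≤ M / 2 + C' * m := by
    intro x
    rcases N.eq_zero_or_pos with rfl | hN
    · rw [hf.eq_zero_of_zero, Pi.zero_apply, norm_zero]
      nlinarith
    · have hV := integrable_of_reproduces_one (hrep _ (isHCPoly_one hN) 0)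
      calc ‖f x‖ = ‖∫ u, f u * V (x - u) ∂torusMeasure d‖ := by rw [← hrep f hf x]
        _ ≤ (torusMeasure d).real B * (M * C'') + m * ∫ u, ‖V (x - u)‖ ∂torusMeasure d :=
          norm_integral_mul_le_of_bound_compl hB hm hfM hfm (hV.comp_sub_left x) fun _ => hVinf _
        _ ≤ M / 2 + C' * m := by
          rw [integral_sub_left_eq_self (fun u => ‖V u‖)]
          nlinarith
  linarith [ciSup_le hpointwise]

end

end RemezHC
end
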